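/- arXiv:1109.4289 — 4 statements merged into one kernel-verified Lean document; each statement's English description precedes it below -/
import Mathlib

section
/- For every nonnegative integer n, the sum over k from 0 to n of (−1)^k · binomial(2n, n+k) · s₁(n+k, k) equals the double factorial (2n−1)!! = 1·3·5···(2n−1) (with the empty product equal to 1 when n = 0). -/
/-- Signed Stirling numbers of the first kind. -/
def s1 : ℕ → ℕ → ℤ
  | 0, 0 => 1
  | 0, _ + 1 => 0
  | n + 1, 0 => -(n : ℤ) * s1 n 0
  | n + 1, k + 1 => s1 n k - (n : ℤ) * s1 n (k + 1)

/-- Signed associated Stirling numbers of the first kind (all cycles of length ≥ 2). -/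
def D : ℕ → ℕ → ℤ
  | 0, 0 => 1
  | 0, _ + 1 => 0
  | 1, _ => 0
  | n + 2, 0 => -((n : ℤ) + 1) * D (n + 1) 0
  | n + 2, k + 1 => -((n : ℤ) + 1) * D (n + 1) (k + 1) - ((n : ℤ) + 1) * D n k

/-- `Dp n k = D (n-1) (k-1)` when both arguments are positive, else `0`. -/
def Dp : ℕ → ℕ → ℤ
  | n + 1, k + 1 => D n k
  | _, _ => 0

lemma Dp_zero_right (n : ℕ) : Dp n 0 = 0 := by cases n <;> rfl

lemma Dp_succ (n k : ℕ) : Dp (n + 1) (k + 1) = D n k := rfl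

lemma D_succ (n k : ℕ) : D (n + 1) k = -(n : ℤ) * D n k - (n : ℤ) * Dp n k := by
  match n, k with
  | 0, 0 => simp [D, Dp]
  | 0, k + 1 => simp [D, Dp]
  | n + 1, 0 => rw [Dp_zero_right]; show -((n : ℤ) + 1) * D (n + 1) 0 = _; push_cast; ring
  | n + 1, k + 1 =>
      show -((n : ℤ) + 1) * D (n + 1) (k + 1) - ((n : ℤ) + 1) * D n k = _
      rw [Dp_succ]; push_cast; ring

lemma D_eq_zero : ∀ n, ∀ k, n < 2 * k → D n k = 0 := by
  intro n
  induction n using Nat.strong_induction_on with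
  | _ n ih =>
    intro k hk
    match k with
    | 0 => omega
    | k + 1 =>
      match n with
      | 0 => rfl
      | n + 1 =>
        rw [D_succ, ih n (by omega) (k + 1) (by omega)]
        have h2 : Dp n (k + 1) = 0 := by
          match n with
          | 0 => rfl
          | n + 1 => exact ih n (by omega) k (by omega)
        rw [h2]; ring

lemma D_diag (n : ℕ) :
    (-1 : ℤ) ^ n * D (2 * n) n = ∏ i ∈ Finset.range n, (2 * (i : ℤ) + 1) := by
  induction n with
  | zero => simp [D]
  | succ n ih =>
    have h1 : 2 * (n + 1) = (2 * n + 1) + 1 := by ring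
    rw [h1, D_succ]
    have h0 : D (2 * n + 1) (n + 1) = 0 := D_eq_zero _ _ (by omega)
    have h2 : Dp (2 * n + 1) (n + 1) = D (2 * n) n := rfl
    rw [h0, h2, Finset.prod_range_succ, ← ih]
    push_cast
    ring

lemma s1_eq (m : ℕ) : ∀ k, s1 m k =
    ∑ f ∈ Finset.range (k + 1), (m.choose f : ℤ) * D (m - f) (k - f) := by
  induction m with
  | zero =>
    intro k
    rw [Finset.sum_eq_single 0]
    · cases k <;> simp [s1, D]
    · intro f _ hne
      match f, hne with
      | f + 1, _ => simp
    · simp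
  | succ m ih =>
    intro k
    cases k with
    | zero =>
      show -(m : ℤ) * s1 m 0
          = ∑ f ∈ Finset.range (0 + 1), ((m + 1).choose f : ℤ) * D (m + 1 - f) (0 - f)
      rw [ih 0]
      simp only [zero_add, Finset.range_one, Finset.sum_singleton, Nat.choose_zero_right,
        Nat.cast_one, one_mul, Nat.sub_zero, Nat.sub_self]
      rw [D_succ, Dp_zero_right]; ring
    | succ k =>
      -- abbreviations
      set S := ∑ f ∈ Finset.range (k + 2),
        ((m + 1).choose f : ℤ) * D (m + 1 - f) (k + 1 - f) with hS
      show s1 (m + 1) (k + 1) = S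
      have hstep1 : S = (∑ f ∈ Finset.range (k + 1),
          ((m + 1).choose (f + 1) : ℤ) * D (m - f) (k - f)) + D (m + 1) (k + 1) := by
        rw [hS, Finset.sum_range_succ']
        simp only [Nat.succ_sub_succ, Nat.choose_zero_right, Nat.cast_one, one_mul, Nat.sub_zero]
      have hpascal : (∑ f ∈ Finset.range (k + 1),
          ((m + 1).choose (f + 1) : ℤ) * D (m - f) (k - f))
          = (∑ f ∈ Finset.range (k + 1), (m.choose f : ℤ) * D (m - f) (k - f))
            + ∑ f ∈ Finset.range (k + 1), (m.choose (f + 1) : ℤ) * D (m - f) (k - f) := by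
        rw [← Finset.sum_add_distrib]
        refine Finset.sum_congr rfl fun f _ => ?_
        rw [Nat.choose_succ_succ]
        push_cast
        ring
      set Sig1 := ∑ f ∈ Finset.range (k + 2), (m.choose f : ℤ) * D (m + 1 - f) (k + 1 - f) with hSig1
      have hstep2 : (∑ f ∈ Finset.range (k + 1), (m.choose (f + 1) : ℤ) * D (m - f) (k - f))
          + D (m + 1) (k + 1) = Sig1 := by
        rw [hSig1]
        conv_rhs => rw [Finset.sum_range_succ']
        simp only [Nat.succ_sub_succ, Nat.choose_zero_right, Nat.cast_one, one_mul, Nat.sub_zero]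
      set T := ∑ f ∈ Finset.range (k + 2), (m.choose f : ℤ) * D (m - f) (k + 1 - f) with hT
      -- Sig1 = -m * T
      have h4a : Sig1 = (∑ f ∈ Finset.range (k + 2),
            -(((m - f : ℕ) : ℤ) * (m.choose f : ℤ) * D (m - f) (k + 1 - f)))
          - ∑ f ∈ Finset.range (k + 2),
            ((m - f : ℕ) : ℤ) * (m.choose f : ℤ) * Dp (m - f) (k + 1 - f) := by
        rw [hSig1, ← Finset.sum_sub_distrib]
        refine Finset.sum_congr rfl fun f _ => ?_
        rcases le_or_gt f m with hfm | hfm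
        · have h5 : m + 1 - f = (m - f) + 1 := by omega
          rw [h5, D_succ]
          ring
        · rw [Nat.choose_eq_zero_of_lt hfm]
          simp
      have h4b : -(m : ℤ) * T = (∑ f ∈ Finset.range (k + 2),
            -(((m - f : ℕ) : ℤ) * (m.choose f : ℤ) * D (m - f) (k + 1 - f)))
          - ∑ f ∈ Finset.range (k + 2),
            ((f : ℕ) : ℤ) * (m.choose f : ℤ) * D (m - f) (k + 1 - f) := by
        rw [hT, Finset.mul_sum, ← Finset.sum_sub_distrib]
        refine Finset.sum_congr rfl fun f _ => ?_
        rcases le_or_gt f m with hfm | hfm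
        · have h5 : ((m - f : ℕ) : ℤ) = (m : ℤ) - f := by
            omega
          rw [h5]; ring
        · rw [Nat.choose_eq_zero_of_lt hfm]
          simp
      have h4c : (∑ f ∈ Finset.range (k + 2),
            ((f : ℕ) : ℤ) * (m.choose f : ℤ) * D (m - f) (k + 1 - f))
          = ∑ f ∈ Finset.range (k + 2),
            ((m - f : ℕ) : ℤ) * (m.choose f : ℤ) * Dp (m - f) (k + 1 - f) := by
        conv_lhs => rw [Finset.sum_range_succ']
        conv_rhs => rw [Finset.sum_range_succ]
        rw [Nat.sub_self, Dp_zero_right, mul_zero, add_zero]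
        simp only [Nat.cast_zero, zero_mul, add_zero, Nat.succ_sub_succ]
        refine Finset.sum_congr rfl fun g hg => ?_
        have hgk : g ≤ k := by simpa [Nat.lt_succ_iff] using hg
        have hk2 : k + 1 - g = (k - g) + 1 := by omega
        rw [hk2]
        rcases le_or_gt (g + 1) m with hgm | hgm
        · obtain ⟨t, ht⟩ : ∃ t, m - g = t + 1 := ⟨m - g - 1, by omega⟩
          have ht2 : m - (g + 1) = t := by omega
          rw [ht, ht2, Dp_succ]
          have hnat : (g + 1) * m.choose (g + 1) = (t + 1) * m.choose g := by
            rw [Nat.mul_comm, Nat.choose_succ_right_eq, ht, Nat.mul_comm]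
          calc ((g + 1 : ℕ) : ℤ) * (m.choose (g + 1) : ℤ) * D t (k - g)
              = (((g + 1) * m.choose (g + 1) : ℕ) : ℤ) * D t (k - g) := by push_cast; ring
            _ = (((t + 1) * m.choose g : ℕ) : ℤ) * D t (k - g) := by rw [hnat]
            _ = ((t + 1 : ℕ) : ℤ) * (m.choose g : ℤ) * D t (k - g) := by push_cast; ring
        · have h6 : m - g = 0 := by omega
          rw [Nat.choose_eq_zero_of_lt hgm, h6]
          simp
      have h4 : Sig1 = -(m : ℤ) * T := by rw [h4a, h4b, h4c]
      have hTs : T = s1 m (k + 1) := (ih (k + 1)).symm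
      have hks : (∑ f ∈ Finset.range (k + 1), (m.choose f : ℤ) * D (m - f) (k - f)) = s1 m k :=
        (ih k).symm
      show s1 m k - (m : ℤ) * s1 m (k + 1) = S
      rw [hstep1, hpascal, hks, add_assoc, hstep2, h4, hTs]
      ring

theorem stmt_3 (n : ℕ) :
    ∑ k ∈ Finset.range (n + 1), (-1 : ℤ) ^ k * ((2 * n).choose (n + k) : ℤ) * s1 (n + k) k
      = ∏ i ∈ Finset.range n, (2 * (i : ℤ) + 1) := by
  have key : ∀ k ∈ Finset.range (n + 1),
      (-1 : ℤ) ^ k * ((2 * n).choose (n + k) : ℤ) * s1 (n + k) k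
      = ∑ j ∈ Finset.range (k + 1),
          (-1 : ℤ) ^ k * ((2 * n).choose (n + k) : ℤ) * ((n + k).choose (n + j) : ℤ)
            * D (n + j) j := by
    intro k _
    rw [s1_eq, ← Finset.sum_range_reflect, Finset.mul_sum]
    refine Finset.sum_congr rfl fun j hj => ?_
    have hjk : j ≤ k := by simpa [Nat.lt_succ_iff] using hj
    have h1 : k + 1 - 1 - j = k - j := by omega
    have h2 : n + k - (k - j) = n + j := by omega
    have h3 : k - (k - j) = j := by omega
    have h4 : (n + k).choose (k - j) = (n + k).choose (n + j) := by
      rw [show k - j = (n + k) - (n + j) from by omega]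
      exact Nat.choose_symm (by omega)
    rw [h1, h2, h3, h4]
    ring
  rw [Finset.sum_congr rfl key]
  have hIco : ∀ k : ℕ, Finset.range (k + 1) = Finset.Ico 0 (k + 1) := fun k => by
    rw [Finset.range_eq_Ico]
  calc
    (∑ k ∈ Finset.range (n + 1), ∑ j ∈ Finset.range (k + 1),
        (-1 : ℤ) ^ k * ((2 * n).choose (n + k) : ℤ) * ((n + k).choose (n + j) : ℤ)
          * D (n + j) j)
        = ∑ j ∈ Finset.range (n + 1), ∑ k ∈ Finset.Ico j (n + 1),
            (-1 : ℤ) ^ k * ((2 * n).choose (n + k) : ℤ) * ((n + k).choose (n + j) : ℤ)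
              * D (n + j) j := by
          simp only [Finset.range_eq_Ico]
          rw [← Finset.sum_Ico_Ico_comm 0 (n + 1)
            (fun j k => (-1 : ℤ) ^ k * ((2 * n).choose (n + k) : ℤ)
              * ((n + k).choose (n + j) : ℤ) * D (n + j) j)]
    _ = ∑ j ∈ Finset.range (n + 1),
          ((2 * n).choose (n + j) : ℤ) * D (n + j) j *
            ((-1 : ℤ) ^ j * (if n - j = 0 then 1 else 0)) := by
          refine Finset.sum_congr rfl fun j hj => ?_
          have hjn : j ≤ n := by simpa [Nat.lt_succ_iff] using hj
          have hinner : ∀ k ∈ Finset.Ico j (n + 1),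
              (-1 : ℤ) ^ k * ((2 * n).choose (n + k) : ℤ) * ((n + k).choose (n + j) : ℤ)
                * D (n + j) j
              = ((2 * n).choose (n + j) : ℤ) * D (n + j) j *
                  ((-1 : ℤ) ^ k * ((n - j).choose (k - j) : ℤ)) := by
            intro k hk
            rw [Finset.mem_Ico] at hk
            have hmul : (2 * n).choose (n + k) * (n + k).choose (n + j)
                = (2 * n).choose (n + j) * (n - j).choose (k - j) := by
              have := Nat.choose_mul (n := 2 * n) (k := n + k) (s := n + j)
                (by omega)
              rwa [show 2 * n - (n + j) = n - j from by omega,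
                show n + k - (n + j) = k - j from by omega] at this
            calc (-1 : ℤ) ^ k * ((2 * n).choose (n + k) : ℤ) * ((n + k).choose (n + j) : ℤ)
                  * D (n + j) j
                = (-1 : ℤ) ^ k * (((2 * n).choose (n + k) * (n + k).choose (n + j) : ℕ) : ℤ)
                    * D (n + j) j := by push_cast; ring
              _ = (-1 : ℤ) ^ k * (((2 * n).choose (n + j) * (n - j).choose (k - j) : ℕ) : ℤ)
                    * D (n + j) j := by rw [hmul]
              _ = ((2 * n).choose (n + j) : ℤ) * D (n + j) j *
                    ((-1 : ℤ) ^ k * ((n - j).choose (k - j) : ℤ)) := by push_cast; ring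
          rw [Finset.sum_congr rfl hinner, ← Finset.mul_sum]
          congr 1
          rw [Finset.sum_Ico_eq_sum_range]
          rw [show n + 1 - j = (n - j) + 1 from by omega]
          calc (∑ i ∈ Finset.range ((n - j) + 1),
                (-1 : ℤ) ^ (j + i) * ((n - j).choose (j + i - j) : ℤ))
              = (-1 : ℤ) ^ j * ∑ i ∈ Finset.range ((n - j) + 1),
                  (-1 : ℤ) ^ i * ((n - j).choose i : ℤ) := by
                rw [Finset.mul_sum]
                refine Finset.sum_congr rfl fun i _ => ?_
                rw [show j + i - j = i from by omega, pow_add]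
                ring
            _ = (-1 : ℤ) ^ j * (if n - j = 0 then 1 else 0) := by
                rw [Int.alternating_sum_range_choose]
    _ = ∏ i ∈ Finset.range n, (2 * (i : ℤ) + 1) := by
          rw [Finset.sum_eq_single n]
          · rw [show n - n = 0 from by omega, if_pos rfl,
              show n + n = 2 * n from by ring, Nat.choose_self]
            rw [← D_diag n]
            push_cast
            ring
          · intro j hj hjn
            have hjn' : j < n + 1 := Finset.mem_range.mp hj
            rw [if_neg (by omega)]
            ring
          · intro h
            exact absurd (Finset.self_mem_range_succ n) h
end

section
/- For all nonnegative integers n and all integers m ≥ 1, the sum over k from −m to n of (−1)^k · binomial(2n, n+k) · s₁(n+k, k+m) equals 0. -/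
open Finset

lemma s1_eq_zero : ∀ n k : ℕ, n < k → s1 n k = 0 := by
  intro n
  induction n with
  | zero => intro k hk; match k, hk with | k+1, _ => rfl
  | succ n ih =>
    intro k hk
    match k, hk with
    | k+1, hk =>
      show s1 n k - (n : ℤ) * s1 n (k + 1) = 0
      rw [ih k (by omega), ih (k+1) (by omega)]; ring

lemma s1_self (n : ℕ) : s1 n n = 1 := by
  induction n with
  | zero => rfl
  | succ n ih =>
    show s1 n n - (n : ℤ) * s1 n (n + 1) = 1
    rw [ih, s1_eq_zero n (n+1) (by omega)]; ring

def g (d i : ℕ) : ℤ := if d ≤ i then s1 i (i - d) else 0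

lemma gstep (d p : ℕ) : g (d+1) (p+1) = g (d+1) p - (p : ℤ) * g d p := by
  rcases lt_trichotomy p d with h | h | h
  · unfold g
    rw [if_neg (by omega), if_neg (by omega), if_neg (by omega)]
    ring
  · subst h
    unfold g
    rw [if_pos (by omega), if_neg (by omega), if_pos (le_refl p)]
    have h1 : p + 1 - (p + 1) = 0 := by omega
    have h2 : p - p = 0 := by omega
    rw [h1, h2]
    show s1 (p+1) 0 = 0 - (p:ℤ) * s1 p 0
    show -(p:ℤ) * s1 p 0 = 0 - (p:ℤ) * s1 p 0
    ring
  · obtain ⟨e, rfl⟩ : ∃ e, p = d + 1 + e := ⟨p - (d+1), by omega⟩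
    unfold g
    rw [if_pos (by omega), if_pos (by omega), if_pos (by omega)]
    have h1 : d + 1 + e + 1 - (d + 1) = e + 1 := by omega
    have h2 : d + 1 + e - (d + 1) = e := by omega
    have h3 : d + 1 + e - d = e + 1 := by omega
    rw [h1, h2, h3]
    show s1 (d+1+e) e - ((d+1+e : ℕ) : ℤ) * s1 (d+1+e) (e+1) = _
    push_cast; ring

lemma gsum (d : ℕ) : ∀ i : ℕ, g (d+1) i = -∑ p ∈ range i, (p : ℤ) * g d p := by
  intro i
  induction i with
  | zero => simp [g]
  | succ i ih => rw [sum_range_succ, gstep d i, ih]; ring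

def PolyRep (c : ℕ → ℤ) (f : ℕ → ℤ) : Prop :=
  ∀ i, f i = ∑ t ∈ range (i+1), c t * (i.choose t : ℤ)

lemma rep_ext {c f : ℕ → ℤ} (h : PolyRep c f) (i M : ℕ) (hiM : i < M) :
    f i = ∑ t ∈ range M, c t * (i.choose t : ℤ) := by
  rw [h i]
  apply Finset.sum_subset
  · intro x hx; rw [mem_range] at *; omega
  · intro x _ hx
    rw [mem_range] at hx
    rw [Nat.choose_eq_zero_of_lt (by omega)]
    ring

def shf (b : ℕ → ℤ) : ℕ → ℤ := fun u => match u with | 0 => 0 | v+1 => b v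

lemma sum_shift (b : ℕ → ℤ) (F : ℕ → ℤ) (i : ℕ) (htop : F (i+1) = 0) :
    ∑ t ∈ range (i+1), b t * F (t+1) = ∑ u ∈ range (i+1), shf b u * F u := by
  rw [Finset.sum_range_succ (fun t => b t * F (t+1)) i,
    Finset.sum_range_succ' (fun u => shf b u * F u) i]
  simp [shf, htop]

lemma hockey' (t : ℕ) : ∀ i : ℕ, ∑ p ∈ range i, (p.choose t : ℤ) = (i.choose (t+1) : ℤ) := by
  intro i
  induction i with
  | zero => simp
  | succ i ih =>
    rw [sum_range_succ, ih, Nat.choose_succ_succ' i t]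
    push_cast; ring

lemma pmul (t p : ℕ) : (p : ℤ) * p.choose t = t * p.choose t + (t+1) * p.choose (t+1) := by
  rcases le_or_gt t p with h | h
  · have h0 := Nat.choose_succ_right_eq p t
    have hc : (p.choose (t+1) : ℤ) * (t+1) = p.choose t * ((p:ℤ) - t) := by
      have h1 := congrArg (fun x : ℕ => (x : ℤ)) h0
      push_cast at h1
      rw [Int.ofNat_sub h] at h1
      linarith
    linarith [hc]
  · rw [Nat.choose_eq_zero_of_lt h, Nat.choose_eq_zero_of_lt (by omega)]
    push_cast; ring

lemma sum_pmul (t i : ℕ) :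
    ∑ p ∈ range i, (p : ℤ) * p.choose t
      = t * i.choose (t+1) + (t+1) * i.choose (t+2) := by
  calc ∑ p ∈ range i, (p : ℤ) * p.choose t
      = ∑ p ∈ range i, ((t : ℤ) * p.choose t + (t+1) * p.choose (t+1)) :=
        sum_congr rfl fun p _ => pmul t p
    _ = (t : ℤ) * ∑ p ∈ range i, (p.choose t : ℤ)
        + (t+1) * ∑ p ∈ range i, (p.choose (t+1) : ℤ) := by
        rw [sum_add_distrib, mul_sum, mul_sum]
    _ = t * i.choose (t+1) + (t+1) * i.choose (t+2) := by rw [hockey', hockey']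

lemma vanish (N t : ℕ) (ht : t < N) :
    ∑ i ∈ range (N+1), (-1:ℤ)^i * (N.choose i) * (i.choose t) = 0 := by
  rw [range_eq_Ico, ← Finset.sum_Ico_consecutive _ (Nat.zero_le t) (by omega : t ≤ N+1)]
  have h1 : ∑ i ∈ Ico 0 t, (-1:ℤ)^i * (N.choose i) * (i.choose t) = 0 := by
    apply Finset.sum_eq_zero
    intro i hi
    rw [mem_Ico] at hi
    rw [Nat.choose_eq_zero_of_lt hi.2]
    push_cast; ring
  rw [h1, zero_add, Finset.sum_Ico_eq_sum_range]
  have h2 : N + 1 - t = (N - t) + 1 := by omega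
  rw [h2]
  have h3 : ∀ u ∈ range (N - t + 1),
      (-1:ℤ)^(t+u) * (N.choose (t+u)) * ((t+u).choose t)
        = ((-1:ℤ)^t * N.choose t) * ((-1:ℤ)^u * (N-t).choose u) := by
    intro u hu
    rw [mem_range] at hu
    have hkn : t + u ≤ N := by omega
    have hmul := Nat.choose_mul (n := N) (Nat.le_add_right t u)
    have heq : (t + u) - t = u := by omega
    rw [heq] at hmul
    have hmul' : (N.choose (t+u) : ℤ) * ((t+u).choose t) = (N.choose t : ℤ) * ((N-t).choose u) := by
      exact_mod_cast congrArg (fun x : ℕ => (x : ℤ)) hmul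
    rw [pow_add]
    calc (-1:ℤ)^t * (-1:ℤ)^u * (N.choose (t+u)) * ((t+u).choose t)
        = (-1:ℤ)^t * (-1:ℤ)^u * ((N.choose (t+u) : ℤ) * ((t+u).choose t)) := by ring
      _ = (-1:ℤ)^t * (-1:ℤ)^u * ((N.choose t : ℤ) * ((N-t).choose u)) := by rw [hmul']
      _ = ((-1:ℤ)^t * N.choose t) * ((-1:ℤ)^u * (N-t).choose u) := by ring
  rw [Finset.sum_congr rfl h3, ← Finset.mul_sum,
    Int.alternating_sum_range_choose_of_ne (by omega : N - t ≠ 0), mul_zero]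

lemma rep_g : ∀ d : ℕ, ∃ c : ℕ → ℤ, (∀ t, 2*d < t → c t = 0) ∧ PolyRep c (g d) := by
  intro d
  induction d with
  | zero =>
    refine ⟨fun t => if t = 0 then 1 else 0, fun t ht => if_neg (by omega), fun i => ?_⟩
    have hg : g 0 i = 1 := by
      simp only [g, if_pos (Nat.zero_le i), Nat.sub_zero]
      exact s1_self i
    rw [hg]
    rw [Finset.sum_eq_single 0]
    · simp
    · intro b _ hb; simp [hb]
    · intro h; exact absurd (mem_range.mpr (by omega)) h
  | succ d ih =>
    obtain ⟨c, hc, hrep⟩ := ih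
    set b1 : ℕ → ℤ := fun t => -(t:ℤ) * c t with hb1
    set b2 : ℕ → ℤ := fun t => -((t:ℤ)+1) * c t with hb2
    refine ⟨fun u => shf b1 u + shf (shf b2) u, ?_, ?_⟩
    · intro t ht
      match t, ht with
      | v+2, ht =>
        have h1 : c (v+1) = 0 := hc _ (by omega)
        have h2 : c v = 0 := hc _ (by omega)
        show b1 (v+1) + b2 v = 0
        rw [hb1, hb2]; simp [h1, h2]
    · intro i
      have step1 : g (d+1) i
          = ∑ t ∈ range (i+1), (-(c t)) * ∑ p ∈ range i, (p:ℤ) * p.choose t := by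
        rw [gsum d i]
        have hsw : ∀ p ∈ range i, (p:ℤ) * g d p
            = ∑ t ∈ range (i+1), c t * ((p:ℤ) * p.choose t) := by
          intro p hp
          rw [mem_range] at hp
          rw [rep_ext hrep p (i+1) (by omega), mul_sum]
          exact sum_congr rfl fun t _ => by ring
        rw [Finset.sum_congr rfl hsw, Finset.sum_comm]
        rw [← Finset.sum_neg_distrib]
        refine sum_congr rfl fun t _ => ?_
        rw [mul_sum, ← Finset.sum_neg_distrib]
        exact sum_congr rfl fun p _ => by ring
      rw [step1]
      have step2 : ∑ t ∈ range (i+1), (-(c t)) * ∑ p ∈ range i, (p:ℤ) * p.choose t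
          = ∑ t ∈ range (i+1), (b1 t * (i.choose (t+1) : ℤ) + b2 t * (i.choose (t+2) : ℤ)) := by
        refine sum_congr rfl fun t _ => ?_
        rw [sum_pmul t i, hb1, hb2]
        ring
      rw [step2, sum_add_distrib]
      have hs1 : ∑ t ∈ range (i+1), b1 t * (i.choose (t+1) : ℤ)
          = ∑ u ∈ range (i+1), shf b1 u * (i.choose u : ℤ) :=
        sum_shift b1 (fun u => (i.choose u : ℤ)) i
          (by rw [Nat.choose_eq_zero_of_lt (by omega)]; simp)
      have hs2 : ∑ t ∈ range (i+1), b2 t * (i.choose (t+2) : ℤ)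
          = ∑ u ∈ range (i+1), shf (shf b2) u * (i.choose u : ℤ) := by
        have e1 : ∑ t ∈ range (i+1), b2 t * (i.choose (t+2) : ℤ)
            = ∑ u ∈ range (i+1), shf b2 u * (i.choose (u+1) : ℤ) :=
          sum_shift b2 (fun u => (i.choose (u+1) : ℤ)) i
            (by rw [Nat.choose_eq_zero_of_lt (by omega)]; simp)
        rw [e1]
        exact sum_shift (shf b2) (fun u => (i.choose u : ℤ)) i
          (by rw [Nat.choose_eq_zero_of_lt (by omega)]; simp)
      rw [hs1, hs2, ← sum_add_distrib]
      exact sum_congr rfl fun u _ => by ring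

/-- Sum over k from -m to n, reindexed by j = k + m (so k = j - m, (-1)^k = (-1)^(j+m)).
    When n + k < 0 the binomial coefficient binomial(2n, n+k) vanishes, whence the guard. -/
theorem stmt_4 (n m : ℕ) (hm : 1 ≤ m) :
    ∑ j ∈ Finset.range (n + m + 1),
      (-1 : ℤ) ^ (j + m) *
        (if m ≤ n + j then ((2 * n).choose (n + j - m) : ℤ) * s1 (n + j - m) j else 0)
      = 0 := by
  rcases le_or_gt m n with hmn | hmn
  · -- main case : d = n - m, N = 2n
    set d := n - m with hd
    set N := 2 * n with hN
    obtain ⟨c, hc, hrep⟩ := rep_g d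
    have hA : ∑ i ∈ range (N+1), (-1:ℤ)^i * (N.choose i) * g d i = 0 := by
      calc ∑ i ∈ range (N+1), (-1:ℤ)^i * (N.choose i) * g d i
          = ∑ i ∈ range (N+1), ∑ t ∈ range (N+1),
              c t * ((-1:ℤ)^i * (N.choose i) * (i.choose t)) := by
            refine sum_congr rfl fun i hi => ?_
            rw [rep_ext hrep i (N+1) (mem_range.mp hi), Finset.mul_sum]
            exact sum_congr rfl fun t _ => by ring
        _ = ∑ t ∈ range (N+1), c t * ∑ i ∈ range (N+1),
              (-1:ℤ)^i * (N.choose i) * (i.choose t) := by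
            rw [Finset.sum_comm]
            exact sum_congr rfl fun t _ => (Finset.mul_sum _ _ _).symm
        _ = 0 := by
            apply Finset.sum_eq_zero
            intro t _
            rcases le_or_gt t (2*d) with h | h
            · rw [vanish N t (by omega)]; ring
            · rw [hc t h]; ring
    have hsplit : ∑ i ∈ range (N+1), (-1:ℤ)^i * (N.choose i) * g d i
        = ∑ j ∈ range (n+m+1), (-1:ℤ)^(d+j) * (N.choose (d+j)) * g d (d+j) := by
      rw [range_eq_Ico, ← Finset.sum_Ico_consecutive _ (Nat.zero_le d) (by omega : d ≤ N+1)]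
      have hz : ∑ i ∈ Ico 0 d, (-1:ℤ)^i * (N.choose i) * g d i = 0 := by
        apply Finset.sum_eq_zero
        intro i hi
        rw [mem_Ico] at hi
        have : g d i = 0 := by simp only [g]; rw [if_neg (by omega)]
        rw [this]; ring
      rw [hz, zero_add, Finset.sum_Ico_eq_sum_range]
      have : N + 1 - d = n + m + 1 := by omega
      rw [this, range_eq_Ico]
    have hB : ∑ j ∈ Finset.range (n + m + 1),
        (-1 : ℤ) ^ (j + m) *
          (if m ≤ n + j then ((2 * n).choose (n + j - m) : ℤ) * s1 (n + j - m) j else 0)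
        = (-1:ℤ)^(m+d) * ∑ j ∈ range (n+m+1), (-1:ℤ)^(d+j) * (N.choose (d+j)) * g d (d+j) := by
      rw [Finset.mul_sum]
      refine sum_congr rfl fun j _ => ?_
      rw [if_pos (by omega)]
      have e1 : n + j - m = d + j := by omega
      have e2 : g d (d+j) = s1 (d+j) j := by
        simp only [g]; rw [if_pos (Nat.le_add_right d j)]
        congr 1; omega
      have e3 : (-1:ℤ)^(m+d) * (-1:ℤ)^(d+j) = (-1:ℤ)^(j+m) := by
        rw [← pow_add]
        have : m + d + (d + j) = (j + m) + 2*d := by omega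
        rw [this, pow_add, pow_mul]
        norm_num
      rw [e1, e2, ← e3]
      ring
    rw [hB, ← hsplit, hA, mul_zero]
  · -- m > n : every Stirling number in the sum vanishes
    apply Finset.sum_eq_zero
    intro j _
    split_ifs with h
    · rw [s1_eq_zero (n + j - m) j (by omega)]
      ring
    · ring
end

section
/- Define L(n, m) = Σ_{k=−m}^{n} (−1)^k · binomial(2n, n+k) · s₁(n+k, k+m) for nonnegative integers n, m. Then L satisfies the recurrence 2(n+1)(2n+3)·L(n, m) − ((2n+3)(4n+3)/(2n+1))·L(n+1, m) + L(n+2, m) + 2(n+1)(2n+3)·L(n+1, m+1) = 0 for all n, m ≥ 0. -/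
def sp (a : ℕ) (b : ℤ) : ℤ := if 0 ≤ b then s1 a b.toNat else 0

def cz (N : ℕ) (k : ℤ) : ℤ := if 0 ≤ k then (N.choose k.toNat : ℤ) else 0

lemma sp_rec (a : ℕ) (b : ℤ) : sp (a+1) (b+1) = sp a b - (a:ℤ) * sp a (b+1) := by
  unfold sp
  by_cases hb : 0 ≤ b
  · have h1 : 0 ≤ b + 1 := by omega
    rw [if_pos h1, if_pos hb, if_pos h1]
    have h2 : (b+1).toNat = b.toNat + 1 := by omega
    rw [h2, s1]
  · by_cases h1 : 0 ≤ b + 1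
    · have h0 : b + 1 = 0 := by omega
      rw [if_pos h1, if_neg hb, if_pos h1, h0]
      show s1 (a+1) 0 = 0 - (a:ℤ) * s1 a 0
      rw [s1]; ring
    · rw [if_neg h1, if_neg hb, if_neg h1]; ring

lemma cz_absorb (N : ℕ) (k : ℤ) : (k+1) * cz N (k+1) = ((N:ℤ) - k) * cz N k := by
  unfold cz
  by_cases hk : 0 ≤ k
  · rw [if_pos (by omega : (0:ℤ) ≤ k + 1), if_pos hk]
    have h2 : (k+1).toNat = k.toNat + 1 := by omega
    rw [h2]
    rcases le_or_gt (k.toNat + 1) N with h | h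
    · have hc := Nat.choose_succ_right_eq N k.toNat
      have hle : k.toNat ≤ N := by omega
      have hk' : (k.toNat : ℤ) = k := by omega
      have := congrArg (fun x : ℕ => (x : ℤ)) hc
      push_cast [Nat.cast_sub hle] at this
      rw [hk'] at this
      linarith [this]
    · rw [Nat.choose_eq_zero_of_lt h]
      rcases eq_or_lt_of_le (show N ≤ k.toNat by omega) with he | hl
      · have : (N:ℤ) = k := by omega
        rw [this]; ring
      · rw [Nat.choose_eq_zero_of_lt hl]; ring
  · by_cases h1 : 0 ≤ k + 1
    · have h0 : k + 1 = 0 := by omega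
      rw [if_pos h1, if_neg hk, h0]; ring
    · rw [if_neg h1, if_neg hk]; ring

lemma cz_pascal (N : ℕ) (k : ℤ) : cz (N+1) k = cz N k + cz N (k-1) := by
  unfold cz
  by_cases hk : 0 ≤ k
  · by_cases hk1 : 0 ≤ k - 1
    · rw [if_pos hk, if_pos hk, if_pos hk1]
      have h2 : k.toNat = (k-1).toNat + 1 := by omega
      rw [h2, Nat.choose_succ_succ, Nat.cast_add]
      ring
    · have h0 : k = 0 := by omega
      rw [if_pos hk, if_pos hk, if_neg hk1, h0]
      simp
  · rw [if_neg hk, if_neg hk, if_neg (by omega : ¬ (0:ℤ) ≤ k - 1)]; ring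

def V (i m n : ℕ) (d : ℤ) : ℤ := sp i ((i:ℤ) + m - n - d)

def W (n i : ℕ) (r : ℤ) : ℤ := cz (2*n) ((i:ℤ) - r)

lemma Vn1 (i m n : ℕ) : V i m (n+1) 0 = V i m n 1 := by
  unfold V; congr 1; push_cast; ring

lemma Vn2 (i m n : ℕ) : V i m (n+2) 0 = V i m n 2 := by
  unfold V; congr 1; push_cast; ring

lemma Vm0 (i m n : ℕ) : V i (m+1) (n+1) 0 = V i m n 0 := by
  unfold V; congr 1; push_cast; ring

lemma Vs0 (i m n : ℕ) : V (i+1) m n 0 = V i m n 0 - (i:ℤ) * V i m n (-1) := by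
  unfold V
  have h := sp_rec i ((i:ℤ) + m - n - 0)
  have e1 : ((i+1:ℕ):ℤ) + m - n - 0 = ((i:ℤ) + m - n - 0) + 1 := by push_cast; ring
  have e2 : ((i:ℤ) + m - n - 0) + 1 = (i:ℤ) + m - n - (-1) := by ring
  rw [e1, h, e2]

lemma Vs1 (i m n : ℕ) : V (i+1) m n 1 = V i m n 1 - (i:ℤ) * V i m n 0 := by
  unfold V
  have h := sp_rec i ((i:ℤ) + m - n - 1)
  have e1 : ((i+1:ℕ):ℤ) + m - n - 1 = ((i:ℤ) + m - n - 1) + 1 := by push_cast; ring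
  have e2 : ((i:ℤ) + m - n - 1) + 1 = (i:ℤ) + m - n - 0 := by ring
  rw [e1, h, e2]

lemma Vs2 (i m n : ℕ) : V (i+1) m n 2 = V i m n 2 - (i:ℤ) * V i m n 1 := by
  unfold V
  have h := sp_rec i ((i:ℤ) + m - n - 2)
  have e1 : ((i+1:ℕ):ℤ) + m - n - 2 = ((i:ℤ) + m - n - 2) + 1 := by push_cast; ring
  have e2 : ((i:ℤ) + m - n - 2) + 1 = (i:ℤ) + m - n - 1 := by ring
  rw [e1, h, e2]

lemma Wcongr (n i : ℕ) {r r' : ℤ} (h : r = r') : W n i r = W n i r' := by rw [h]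

lemma Ws (n i : ℕ) (r : ℤ) : W n (i+1) r = W n i (r-1) := by
  unfold W; congr 1; push_cast; ring

lemma Wn2 (n i : ℕ) (r : ℤ) : W (n+1) i r = W n i r + 2 * W n i (r+1) + W n i (r+2) := by
  unfold W
  have e : 2*(n+1) = (2*n+1)+1 := by ring
  rw [e, cz_pascal, cz_pascal, cz_pascal]
  have e1 : (i:ℤ) - r - 1 = (i:ℤ) - (r+1) := by ring
  have e2 : (i:ℤ) - r - 1 - 1 = (i:ℤ) - (r+2) := by ring
  rw [e2, e1]
  ring

lemma Wn4 (n i : ℕ) : W (n+2) i 0 = W n i 0 + 4 * W n i 1 + 6 * W n i 2 + 4 * W n i 3 + W n i 4 := by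
  have e : n + 2 = (n+1)+1 := rfl
  rw [e, Wn2, Wn2, Wn2, Wn2]
  norm_num
  ring

lemma Wab (n i : ℕ) (r : ℤ) : ((i:ℤ) - r) * W n i r = (2*(n:ℤ) - i + r + 1) * W n i (r+1) := by
  unfold W
  have h := cz_absorb (2*n) ((i:ℤ) - r - 1)
  have e1 : ((i:ℤ) - r - 1) + 1 = (i:ℤ) - r := by ring
  rw [e1] at h
  rw [h]
  have e2 : (i:ℤ) - r - 1 = (i:ℤ) - (r+1) := by ring
  rw [e2]
  push_cast
  ring

/-- L(n, m) = Σ_{k=−m}^{n} (−1)^k binomial(2n, n+k) s₁(n+k, k+m), written with the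
    reindexing j = k + m ∈ [0, n+m]; when n + k < 0 the binomial coefficient vanishes. -/
def L (n m : ℕ) : ℤ :=
  ∑ j ∈ Finset.range (n + m + 1),
    (-1 : ℤ) ^ (j + m) *
      (if m ≤ n + j then ((2 * n).choose (n + j - m) : ℤ) * s1 (n + j - m) j else 0)

lemma negpow (a b : ℕ) (h : a % 2 = b % 2) : ((-1 : ℤ)) ^ a = (-1) ^ b := by
  rcases Nat.even_or_odd a with he | ho
  · have ha := Nat.even_iff.1 he
    rw [he.neg_one_pow, (Nat.even_iff.2 (by omega : b % 2 = 0)).neg_one_pow]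
  · have ha := Nat.odd_iff.1 ho
    rw [ho.neg_one_pow, (Nat.odd_iff.2 (by omega : b % 2 = 1)).neg_one_pow]

lemma term_eq (n m j : ℕ) (hg : m ≤ n + j) :
    (-1 : ℤ) ^ (j + m) *
      (if m ≤ n + j then ((2 * n).choose (n + j - m) : ℤ) * s1 (n + j - m) j else 0)
    = (-1 : ℤ) ^ ((n + j - m) + n) * W n (n + j - m) 0 * V (n + j - m) m n 0 := by
  rw [if_pos hg]
  have hW : W n (n + j - m) 0 = ((2 * n).choose (n + j - m) : ℤ) := by
    unfold W cz
    rw [sub_zero, if_pos (by positivity)]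
    norm_num
  have hV : V (n + j - m) m n 0 = s1 (n + j - m) j := by
    unfold V sp
    have e : ((n + j - m : ℕ) : ℤ) + m - n - 0 = (j : ℤ) := by
      have : ((n + j - m : ℕ) : ℤ) = (n : ℤ) + j - m := by omega
      rw [this]; ring
    rw [e, if_pos (by positivity)]
    norm_num
  rw [hW, hV, negpow (j + m) ((n + j - m) + n) (by omega)]
  ring

lemma L_eq (n m N : ℕ) (hN : 2 * n + 1 ≤ N) :
    L n m = ∑ i ∈ Finset.range N, (-1 : ℤ) ^ (i + n) * W n i 0 * V i m n 0 := by
  unfold L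
  refine Finset.sum_bij_ne_zero (fun j _ _ => n + j - m) ?_ ?_ ?_ ?_
  · intro j h1 h2
    simp only [Finset.mem_range] at h1 ⊢
    have hg : m ≤ n + j := by
      by_contra hc
      exact h2 (by rw [if_neg hc]; ring)
    have hch : (2 * n).choose (n + j - m) ≠ 0 := by
      intro hz
      exact h2 (by rw [if_pos hg, hz]; push_cast; ring)
    have := Nat.choose_le_middle (n + j - m) (2 * n)  -- unused; bound via choose_eq_zero
    have hle : n + j - m ≤ 2 * n := by
      by_contra hc
      exact hch (Nat.choose_eq_zero_of_lt (by omega))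
    omega
  · intro j1 h11 h12 j2 h21 h22 heq
    have hg1 : m ≤ n + j1 := by
      by_contra hc; exact h12 (by rw [if_neg hc]; ring)
    have hg2 : m ≤ n + j2 := by
      by_contra hc; exact h22 (by rw [if_neg hc]; ring)
    have heq' : n + j1 - m = n + j2 - m := heq
    omega
  · intro b hb hgb
    have hsp : V b m n 0 ≠ 0 := by
      intro hz; exact hgb (by rw [hz]; ring)
    have hW : W n b 0 ≠ 0 := by
      intro hz; exact hgb (by rw [hz]; ring)
    have hbm : n ≤ b + m := by
      by_contra hc
      apply hsp
      unfold V sp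
      rw [if_neg (by push_cast; omega)]
    have hb2 : b ≤ 2 * n := by
      by_contra hc
      apply hW
      unfold W cz
      rw [sub_zero, if_pos (by positivity)]
      norm_num
      exact Nat.choose_eq_zero_of_lt (by omega)
    refine ⟨b + m - n, by simp only [Finset.mem_range]; omega, ?_,
      by show n + (b + m - n) - m = b; omega⟩
    have hg : m ≤ n + (b + m - n) := by omega
    rw [term_eq n m (b + m - n) hg]
    have hb' : n + (b + m - n) - m = b := by omega
    rw [hb']
    intro hz
    exact hgb hz
  · intro j h1 h2
    have hg : m ≤ n + j := by
      by_contra hc; exact h2 (by rw [if_neg hc]; ring)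
    exact term_eq n m j hg

def Gc (n m i : ℕ) : ℤ :=
  (-1 : ℤ) ^ (i + n) *
    (V i m n 0 * ( -((4*(n:ℤ)^2+8*n+5) * i) * W n i 0
        + (8*(n:ℤ)^3+24*n^2+26*n+8 - (8*(n:ℤ)^2+14*n+7)*i - (2*(n:ℤ)+1)*i^2) * W n i 1
        + (8*(n:ℤ)^3+24*n^2+22*n+6 - (2*(n:ℤ)+1)*i - (2*(n:ℤ)+1)*i^2) * W n i 2)
      + V i m n 1 * ( (-(8*((n:ℤ)+1)^2) - (2*(n:ℤ)+1)*i) * W n i 1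
        + (-(8*((n:ℤ)+1)^2) - 2*(2*(n:ℤ)+1)*i) * W n i 2
        - (2*(n:ℤ)+1)*i * W n i 3)
      + V i m n 2 * (-(2*(n:ℤ)+1)) * (W n i 1 + 3 * W n i 2 + 3 * W n i 3 + W n i 4))

lemma Wneg (n i : ℕ) (r : ℤ) (h : (i:ℤ) - r < 0) : W n i r = 0 := by
  unfold W cz; rw [if_neg (by omega)]

lemma Wbig (n i : ℕ) (r : ℤ) (h : 2*(n:ℤ) < (i:ℤ) - r) : W n i r = 0 := by
  unfold W cz
  by_cases h0 : 0 ≤ (i:ℤ) - r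
  · rw [if_pos h0, Nat.choose_eq_zero_of_lt (by omega)]; norm_num
  · rw [if_neg h0]

lemma Gc_zero (n m : ℕ) : Gc n m 0 = 0 := by
  simp only [Gc]
  rw [Wneg n 0 1 (by norm_num), Wneg n 0 2 (by norm_num), Wneg n 0 3 (by norm_num),
    Wneg n 0 4 (by norm_num)]
  push_cast; ring

lemma Gc_top (n m : ℕ) : Gc n m (2*n+5) = 0 := by
  simp only [Gc]
  rw [Wbig n (2*n+5) 0 (by push_cast; omega), Wbig n (2*n+5) 1 (by push_cast; omega),
    Wbig n (2*n+5) 2 (by push_cast; omega), Wbig n (2*n+5) 3 (by push_cast; omega),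
    Wbig n (2*n+5) 4 (by push_cast; omega)]
  push_cast; ring

lemma Vngen (i m n : ℕ) (d : ℤ) : V i m (n+1) d = V i m n (d+1) := by
  unfold V; congr 1; push_cast; ring

lemma Vmgen (i m n : ℕ) (d : ℤ) : V i (m+1) n d = V i m n (d-1) := by
  unfold V; congr 1; push_cast; ring

lemma Vsgen (i m n : ℕ) (d : ℤ) : V (i+1) m n d = V i m n d - (i:ℤ) * V i m n (d-1) := by
  unfold V
  have h := sp_rec i ((i:ℤ) + m - n - d)
  have e1 : ((i+1:ℕ):ℤ) + m - n - d = ((i:ℤ) + m - n - d) + 1 := by push_cast; ring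
  have e2 : ((i:ℤ) + m - n - d) + 1 = (i:ℤ) + m - n - (d-1) := by ring
  rw [e1, h, e2]

lemma key (n m i : ℕ) :
    (2 * (n : ℤ) + 1) * (2 * ((n:ℤ) + 1) * (2 * (n:ℤ) + 3)) * ((-1 : ℤ) ^ (i + n) * W n i 0 * V i m n 0)
      - (2 * (n : ℤ) + 3) * (4 * (n:ℤ) + 3) * ((-1 : ℤ) ^ (i + (n+1)) * W (n+1) i 0 * V i m (n+1) 0)
      + (2 * (n : ℤ) + 1) * ((-1 : ℤ) ^ (i + (n+2)) * W (n+2) i 0 * V i m (n+2) 0)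
      + (2 * (n : ℤ) + 1) * (2 * ((n:ℤ) + 1) * (2 * (n:ℤ) + 3)) * ((-1 : ℤ) ^ (i + (n+1)) * W (n+1) i 0 * V i (m+1) (n+1) 0)
    = Gc n m (i+1) - Gc n m i := by
  have hab0 := Wab n i (-1)
  norm_num at hab0
  have hab1 := Wab n i 0
  norm_num at hab1
  simp only [Gc, Vngen, Vmgen, Vsgen, Wn2, Ws,
    show i + (n+1) = (i+n) + 1 from by omega,
    show i + (n+2) = (i+n) + 1 + 1 from by omega,
    show i + 1 + n = (i+n) + 1 from by omega,
    pow_succ]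
  norm_num
  push_cast
  linear_combination
    ((-1:ℤ)^(i+n)) * ((4*(n:ℤ)^2+8*n+5) * i * V i m n (-1)
      - (4*(n:ℤ)^2+8*n+5) * V i m n 0) * hab0
    + ((-1:ℤ)^(i+n)) * ((i:ℤ) * (4*(n:ℤ)^2+10*n+4 + (2*(n:ℤ)+1)*i)) * V i m n (-1) * hab1

/-- The recurrence, multiplied through by (2n+1) to clear the denominator. -/
theorem stmt_14 (n m : ℕ) :
    (2 * (n : ℤ) + 1) * (2 * (n + 1) * (2 * n + 3)) * L n m
      - (2 * (n : ℤ) + 3) * (4 * n + 3) * L (n + 1) m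
      + (2 * (n : ℤ) + 1) * L (n + 2) m
      + (2 * (n : ℤ) + 1) * (2 * (n + 1) * (2 * n + 3)) * L (n + 1) (m + 1) = 0 := by
  rw [L_eq n m (2*n+5) (by omega), L_eq (n+1) m (2*n+5) (by omega),
    L_eq (n+2) m (2*n+5) (by omega), L_eq (n+1) (m+1) (2*n+5) (by omega)]
  rw [Finset.mul_sum, Finset.mul_sum, Finset.mul_sum, Finset.mul_sum,
    ← Finset.sum_sub_distrib, ← Finset.sum_add_distrib, ← Finset.sum_add_distrib]
  rw [Finset.sum_congr rfl (fun i _ => key n m i),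
    Finset.sum_range_sub (fun i => Gc n m i), Gc_top, Gc_zero]
  ring
end

section
/- Let f(k) be a nonzero hypergeometric term over a field of characteristic zero with Gosper–Petkovšek representation f(k+1)/f(k) = u · (A(k)/B(k)) · (C(k+1)/C(k)) where u is a nonzero constant and A, B, C are monic polynomials with gcd(A(k), B(k+j)) = 1 for all j ≥ 0, gcd(A(k), C(k)) = 1, and gcd(B(k), C(k+1)) = 1. If f is C-finite, i.e., there exist constants a₀, …, a_d, not all zero, with a₀ f(k) + a₁ f(k+1) + ··· + a_d f(k+d) = 0 for all k, then A(k) = 1 and B(k) = 1. -/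
open Polynomial

private lemma coprime_aeval_ne {K L : Type*} [CommSemiring K] [Field L] [Algebra K L]
    {p q : K[X]} (h : IsCoprime p q) {x : L} (hp : aeval x p = 0) : aeval x q ≠ 0 := by
  obtain ⟨s, t, hst⟩ := h
  intro hq
  have h2 := congrArg (aeval x) hst
  simp [hp, hq] at h2

private lemma exists_min_shift {L : Type*} [Field L] [CharZero L] (R : Finset L) (hne : R.Nonempty) :
    ∃ α ∈ R, ∀ m : ℕ, 1 ≤ m → α - m ∉ R := by
  classical
  obtain ⟨α, hαR, hmin⟩ := Finset.exists_min_image R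
    (fun α => (R.filter (fun β => ∃ m : ℕ, 1 ≤ m ∧ β + m = α)).card) hne
  refine ⟨α, hαR, fun m hm hmem => ?_⟩
  set β := α - (m : L) with hβ
  have hβα : β + (m : L) = α := sub_add_cancel _ _
  have hlt : (R.filter (fun γ => ∃ m' : ℕ, 1 ≤ m' ∧ γ + m' = β)).card
      < (R.filter (fun γ => ∃ m' : ℕ, 1 ≤ m' ∧ γ + m' = α)).card := by
    apply Finset.card_lt_card
    constructor
    · intro γ hγ
      simp only [Finset.mem_filter] at hγ ⊢
      obtain ⟨hγR, m', hm', hγβ⟩ := hγ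
      exact ⟨hγR, m' + m, by omega, by rw [← hβα, ← hγβ]; push_cast; ring⟩
    · intro hsub
      have hβmem : β ∈ R.filter (fun γ => ∃ m' : ℕ, 1 ≤ m' ∧ γ + m' = α) :=
        Finset.mem_filter.mpr ⟨hmem, m, hm, hβα⟩
      have := hsub hβmem
      simp only [Finset.mem_filter] at this
      obtain ⟨-, m', hm', habs⟩ := this
      have hz : β + (m' : L) = β + 0 := by rw [add_zero]; exact habs
      exact absurd (Nat.cast_eq_zero.mp (add_left_cancel hz)) (by omega)
  exact absurd (hmin β hmem) (by omega)

private lemma exists_max_shift {L : Type*} [Field L] [CharZero L] (R : Finset L) (hne : R.Nonempty) :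
    ∃ α ∈ R, ∀ m : ℕ, 1 ≤ m → α + m ∉ R := by
  classical
  obtain ⟨α, hα, hprop⟩ := exists_min_shift (R.image Neg.neg) (hne.image _)
  obtain ⟨γ, hγR, hγ⟩ := Finset.mem_image.mp hα
  refine ⟨γ, hγR, fun m hm hmem => ?_⟩
  apply hprop m hm
  apply Finset.mem_image.mpr ⟨γ + m, hmem, ?_⟩
  rw [← hγ]; ring



open Polynomial in
/-- Lemma on C-finiteness of hypergeometric terms: if a nonzero hypergeometric term `f`
with Gosper–Petkovšek representation `f(k+1)/f(k) = u · (A(k)/B(k)) · (C(k+1)/C(k))`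
is C-finite, then `A = 1` and `B = 1`. -/
theorem stmt_16 (K : Type*) [Field K] [CharZero K]
    (f : ℕ → K) (hf : ∀ k, f k ≠ 0)
    (u : K) (hu : u ≠ 0)
    (A B C : K[X]) (hA : A.Monic) (hB : B.Monic) (hC : C.Monic)
    -- the GP (Gosper–Petkovšek) coprimality conditions
    (hAB : ∀ j : ℕ, IsCoprime A (B.comp (X + Polynomial.C (j : K))))
    (hAC : IsCoprime A C)
    (hBC : IsCoprime B (C.comp (X + Polynomial.C 1)))
    -- f(k+1)/f(k) = u · (A(k)/B(k)) · (C(k+1)/C(k))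
    (hratio : ∀ k : ℕ,
      f (k + 1) * (B.eval (k : K) * C.eval (k : K))
        = u * A.eval (k : K) * C.eval ((k : K) + 1) * f k)
    -- f is C-finite: a linear recurrence with constant coefficients, not all zero
    (d : ℕ) (a : ℕ → K) (ha : ∃ i ≤ d, a i ≠ 0)
    (hrec : ∀ k : ℕ, ∑ i ∈ Finset.range (d + 1), a i * f (k + i) = 0) :
    A = 1 ∧ B = 1 := by
  classical
  set P : K[X] := ∑ i ∈ Finset.range (d+1), Polynomial.C (a i * u ^ i) *
      ((∏ j ∈ Finset.range i, A.comp (X + Polynomial.C (j:K))) *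
       ((∏ j ∈ Finset.Ico i d, B.comp (X + Polynomial.C (j:K))) *
        C.comp (X + Polynomial.C (i:K)))) with hPdef
  obtain ⟨N, hN⟩ : ∃ N : ℕ, ∀ m : ℕ, N ≤ m → C.eval (m : K) ≠ 0 := by
    have h1 : {x : K | C.IsRoot x}.Finite := Polynomial.finite_setOf_isRoot hC.ne_zero
    have h2 : {n : ℕ | C.eval (n : K) = 0}.Finite := by
      have := Set.Finite.preimage (f := fun n : ℕ => (n : K))
        (Set.injOn_of_injective Nat.cast_injective) h1
      exact this
    obtain ⟨N, hN⟩ := h2.bddAbove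
    exact ⟨N + 1, fun m hm h0 => by have := hN h0; omega⟩
  have key : ∀ k : ℕ, N ≤ k → ∀ i : ℕ,
      f (k+i) * ((∏ j ∈ Finset.range i, B.eval ((k:K)+j)) * C.eval (k:K))
        = u^i * ((∏ j ∈ Finset.range i, A.eval ((k:K)+j)) * (C.eval ((k:K)+i) * f k)) := by
    intro k hk i
    induction i with
    | zero => simp; ring
    | succ i ih =>
      have hCk : C.eval ((k:K)+i) ≠ 0 := by
        have := hN (k+i) (by omega); push_cast at this; exact this
      have hr := hratio (k+i)
      push_cast at hr
      apply mul_left_cancel₀ hCk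
      rw [Finset.prod_range_succ, Finset.prod_range_succ]
      have hfi : f (k + (i+1)) = f (k + i + 1) := by ring_nf
      rw [hfi]
      push_cast
      simp only [← add_assoc]
      linear_combination ((∏ j ∈ Finset.range i, B.eval ((k:K)+j)) * C.eval (k:K)) * hr
        + u * A.eval ((k:K)+i) * C.eval ((k:K)+i+1) * ih
  have hPeval : ∀ k : ℕ, N ≤ k → P.eval (k:K) = 0 := by
    intro k hk
    have h0 := hrec k
    have hmul : P.eval (k:K) * f k
        = (∑ i ∈ Finset.range (d+1), a i * f (k+i)) *
          ((∏ j ∈ Finset.range d, B.eval ((k:K)+j)) * C.eval (k:K)) := by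
      rw [hPdef, eval_finset_sum, Finset.sum_mul, Finset.sum_mul]
      refine Finset.sum_congr rfl fun i hi => ?_
      have hid : i ≤ d := by simpa [Nat.lt_succ] using Finset.mem_range.mp hi
      have hsplit : (∏ j ∈ Finset.range i, B.eval ((k:K)+j)) *
          (∏ j ∈ Finset.Ico i d, B.eval ((k:K)+j)) = ∏ j ∈ Finset.range d, B.eval ((k:K)+j) :=
        Finset.prod_range_mul_prod_Ico _ hid
      have hkey := key k hk i
      simp only [eval_mul, eval_prod, eval_comp, eval_add, eval_X, eval_C]
      linear_combination (-(a i) * (∏ j ∈ Finset.Ico i d, B.eval ((k:K)+j))) * hkey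
        + (a i * f (k+i) * C.eval (k:K)) * hsplit
    rw [h0, zero_mul] at hmul
    exact (mul_eq_zero.mp hmul).resolve_right (hf k)
  have hP0 : P = 0 := by
    apply Polynomial.eq_zero_of_infinite_isRoot
    refine Set.infinite_of_injective_forall_mem (f := fun n : ℕ => ((N + n : ℕ) : K))
      (fun x y hxy => by have := Nat.cast_injective (R := K) hxy; omega)
      (fun n => hPeval (N + n) (by omega))
  set L := AlgebraicClosure K with hLdef
  set φ := algebraMap K L with hφdef
  have hφinj : Function.Injective φ := φ.injective
  have hexp : ∀ x : L, ∑ i ∈ Finset.range (d+1), φ (a i * u ^ i) *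
      ((∏ j ∈ Finset.range i, aeval (x + (j:L)) A) *
       ((∏ j ∈ Finset.Ico i d, aeval (x + (j:L)) B) * aeval (x + (i:L)) C)) = 0 := by
    intro x
    have h : aeval x P = 0 := by rw [hP0]; simp
    rw [hPdef] at h
    simpa only [map_sum, map_mul, map_prod, aeval_comp, map_add, aeval_X, aeval_C,
      map_natCast] using h
  have hcoeff : ∀ i, a i ≠ 0 → φ (a i * u ^ i) ≠ 0 := fun i hi hz =>
    (mul_ne_zero hi (pow_ne_zero _ hu)) (hφinj (hz.trans (map_zero φ).symm))
  obtain ⟨iw, hiwd, hiw⟩ := ha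
  -- minimal nonzero index
  have hPex : ∃ i, a i ≠ 0 := ⟨iw, hiw⟩
  set i0 := Nat.find hPex with hi0def
  have hai0 : a i0 ≠ 0 := Nat.find_spec hPex
  have hi0d : i0 ≤ d := le_trans (Nat.find_min' hPex hiw) hiwd
  have hbelow : ∀ i, i < i0 → a i = 0 := fun i hi => by
    by_contra hcon; exact Nat.find_min hPex hi hcon
  -- maximal nonzero index i1
  have hPex' : ∃ j, a (d - j) ≠ 0 := ⟨d - iw, by rwa [Nat.sub_sub_self hiwd]⟩
  set i1 := d - Nat.find hPex' with hi1def
  have hai1 : a i1 ≠ 0 := Nat.find_spec hPex'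
  have hi1d : i1 ≤ d := Nat.sub_le _ _
  have habove : ∀ i, i1 < i → i ≤ d → a i = 0 := by
    intro i h1 h2
    by_contra hcon
    have : ¬ a (d - (d - i)) ≠ 0 := Nat.find_min hPex' (by omega)
    rw [Nat.sub_sub_self h2] at this
    exact this hcon
  constructor
  · -- A = 1
    by_contra hAne
    have hAmapne : A.map φ ≠ 0 := (hA.map φ).ne_zero
    have hdegA : (A.map φ).degree ≠ 0 := by
      rw [Polynomial.degree_map]
      intro h0
      exact hAne (hA.natDegree_eq_zero.mp
        (Polynomial.natDegree_eq_zero_iff_degree_le_zero.mpr h0.le))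
    obtain ⟨α0, hα0⟩ := IsAlgClosed.exists_root (A.map φ) hdegA
    set R := (A.map φ).roots.toFinset with hRdef
    have hRne : R.Nonempty := ⟨α0, Multiset.mem_toFinset.mpr
      (Polynomial.mem_roots'.mpr ⟨hAmapne, hα0⟩)⟩
    obtain ⟨α, hαR, hαmin⟩ := exists_min_shift R hRne
    have hroot : aeval α A = 0 := by
      have := (Polynomial.mem_roots'.mp (Multiset.mem_toFinset.mp hαR)).2
      rwa [Polynomial.IsRoot, Polynomial.eval_map, ← Polynomial.aeval_def] at this
    have hnotroot : ∀ m : ℕ, 1 ≤ m → aeval (α - (m:L)) A ≠ 0 := by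
      intro m hm hzero
      exact hαmin m hm (Multiset.mem_toFinset.mpr (Polynomial.mem_roots'.mpr
        ⟨hAmapne, by rwa [Polynomial.IsRoot, Polynomial.eval_map, ← Polynomial.aeval_def]⟩))
    set x₀ : L := α - (i0 : L) with hx₀
    have h := hexp x₀
    rw [Finset.sum_eq_single_of_mem i0 (Finset.mem_range.mpr (by omega))
      (fun b hb hbne => ?_)] at h
    · refine absurd h (mul_ne_zero (hcoeff i0 hai0)
        (mul_ne_zero ?_ (mul_ne_zero ?_ ?_)))
      · refine Finset.prod_ne_zero_iff.mpr fun j hj => ?_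
        have hj' : j < i0 := Finset.mem_range.mp hj
        have hpt : x₀ + (j:L) = α - ((i0 - j : ℕ) : L) := by
          rw [Nat.cast_sub hj'.le, hx₀]; ring
        rw [hpt]; exact hnotroot _ (by omega)
      · refine Finset.prod_ne_zero_iff.mpr fun j hj => ?_
        have hj' := Finset.mem_Ico.mp hj
        have h2 := coprime_aeval_ne (hAB (j - i0)) hroot
        rw [aeval_comp] at h2
        simp only [map_add, aeval_X, aeval_C, map_natCast] at h2
        have hpt : x₀ + (j:L) = α + ((j - i0 : ℕ) : L) := by
          rw [Nat.cast_sub hj'.1, hx₀]; ring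
        rw [hpt]; exact h2
      · have hpt : x₀ + (i0:L) = α := by rw [hx₀]; ring
        rw [hpt]; exact coprime_aeval_ne hAC hroot
    · rcases Nat.lt_or_ge b i0 with hlt | hge
      · simp [hbelow b hlt]
      · have hbi : i0 < b := by omega
        have hz : aeval (x₀ + (i0:L)) A = 0 := by
          rw [show x₀ + (i0:L) = α from by rw [hx₀]; ring]; exact hroot
        rw [Finset.prod_eq_zero (Finset.mem_range.mpr hbi) hz]
        ring
  · -- B = 1
    by_contra hBne
    have hBmapne : B.map φ ≠ 0 := (hB.map φ).ne_zero
    have hdegB : (B.map φ).degree ≠ 0 := by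
      rw [Polynomial.degree_map]
      intro h0
      exact hBne (hB.natDegree_eq_zero.mp
        (Polynomial.natDegree_eq_zero_iff_degree_le_zero.mpr h0.le))
    obtain ⟨β0, hβ0⟩ := IsAlgClosed.exists_root (B.map φ) hdegB
    set R := (B.map φ).roots.toFinset with hRdef
    have hRne : R.Nonempty := ⟨β0, Multiset.mem_toFinset.mpr
      (Polynomial.mem_roots'.mpr ⟨hBmapne, hβ0⟩)⟩
    obtain ⟨β, hβR, hβmax⟩ := exists_max_shift R hRne
    have hroot : aeval β B = 0 := by
      have := (Polynomial.mem_roots'.mp (Multiset.mem_toFinset.mp hβR)).2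
      rwa [Polynomial.IsRoot, Polynomial.eval_map, ← Polynomial.aeval_def] at this
    have hnotroot : ∀ m : ℕ, 1 ≤ m → aeval (β + (m:L)) B ≠ 0 := by
      intro m hm hzero
      exact hβmax m hm (Multiset.mem_toFinset.mpr (Polynomial.mem_roots'.mpr
        ⟨hBmapne, by rwa [Polynomial.IsRoot, Polynomial.eval_map, ← Polynomial.aeval_def]⟩))
    -- first: i1 ≥ 1
    have hi1pos : 1 ≤ i1 := by
      by_contra hcon
      have hi10 : i1 = 0 := by omega
      -- then P = C (a 0) * monic ≠ 0
      have hP' : P = Polynomial.C (a 0 * u ^ 0) *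
          ((∏ j ∈ Finset.range 0, A.comp (X + Polynomial.C (j:K))) *
           ((∏ j ∈ Finset.Ico 0 d, B.comp (X + Polynomial.C (j:K))) *
            C.comp (X + Polynomial.C ((0:ℕ):K)))) := by
        rw [hPdef]
        apply Finset.sum_eq_single_of_mem 0 (Finset.mem_range.mpr (by omega))
        intro b hb hbne
        have : a b = 0 := habove b (by omega) (by
          have := Finset.mem_range.mp hb; omega)
        simp [this]
      have hQmonic : ((∏ j ∈ Finset.range 0, A.comp (X + Polynomial.C (j:K))) *
           ((∏ j ∈ Finset.Ico 0 d, B.comp (X + Polynomial.C (j:K))) *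
            C.comp (X + Polynomial.C ((0:ℕ):K)))).Monic := by
        refine (monic_prod_of_monic _ _ fun j _ => hA.comp_X_add_C _).mul
          ((monic_prod_of_monic _ _ fun j _ => hB.comp_X_add_C _).mul (hC.comp_X_add_C _))
      rw [hP0] at hP'
      have ha0 : a 0 ≠ 0 := hi10 ▸ hai1
      have := mul_ne_zero (Polynomial.C_ne_zero.mpr
        (mul_ne_zero ha0 (pow_ne_zero 0 hu))) hQmonic.ne_zero
      · exact this hP'.symm
    have hi11 : i1 - 1 < d := by omega
    set x₁ : L := β - ((i1 - 1 : ℕ) : L) with hx₁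
    have h := hexp x₁
    rw [Finset.sum_eq_single_of_mem i1 (Finset.mem_range.mpr (by omega))
      (fun b hb hbne => ?_)] at h
    · refine absurd h (mul_ne_zero (hcoeff i1 hai1)
        (mul_ne_zero ?_ (mul_ne_zero ?_ ?_)))
      · -- A values: x₁ + j = β - (i1-1-j), use coprimality with B shifted
        refine Finset.prod_ne_zero_iff.mpr fun j hj => ?_
        have hj' : j < i1 := Finset.mem_range.mp hj
        have hqzero : aeval (β - ((i1 - 1 - j : ℕ) : L))
            (B.comp (X + Polynomial.C ((i1 - 1 - j : ℕ) : K))) = 0 := by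
          rw [aeval_comp]
          simp only [map_add, aeval_X, aeval_C, map_natCast]
          rw [sub_add_cancel]
          exact hroot
        have h2 := coprime_aeval_ne (hAB (i1 - 1 - j)).symm hqzero
        have hpt : x₁ + (j:L) = β - ((i1 - 1 - j : ℕ) : L) := by
          rw [hx₁, Nat.cast_sub (show j ≤ i1 - 1 by omega), Nat.cast_sub hi1pos]
          ring
        rw [hpt]; exact h2
      · -- B values at shift ≥ 1
        refine Finset.prod_ne_zero_iff.mpr fun j hj => ?_
        have hj' := Finset.mem_Ico.mp hj
        have hpt : x₁ + (j:L) = β + ((j - i1 + 1 : ℕ) : L) := by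
          rw [hx₁, Nat.cast_add, Nat.cast_sub hj'.1, Nat.cast_sub hi1pos]
          ring
        rw [hpt]; exact hnotroot _ (by omega)
      · -- C value at β + 1
        have h2 := coprime_aeval_ne hBC hroot
        rw [aeval_comp] at h2
        simp only [map_add, aeval_X, aeval_C, map_one] at h2
        have hpt : x₁ + (i1:L) = β + 1 := by
          rw [hx₁, Nat.cast_sub hi1pos]; ring
        rw [hpt]; exact h2
    · rcases Nat.lt_or_ge i1 b with hgt | hle
      · have : a b = 0 := habove b hgt (by have := Finset.mem_range.mp hb; omega)
        simp [this]
      · have hbi : b < i1 := by omega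
        have hz : aeval (x₁ + ((i1 - 1 : ℕ):L)) B = 0 := by
          rw [show x₁ + ((i1-1:ℕ):L) = β from by rw [hx₁]; ring]; exact hroot
        rw [Finset.prod_eq_zero (Finset.mem_Ico.mpr ⟨by omega, hi11⟩) hz]
        ring
end
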